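/- Generalized Grönwall lemma of Volterra type: Let f : [0,T] → ℝ≥0 be Borel, locally bounded, non-decreasing, and ψ : [0,T] → ℝ≥0 non-negative and non-decreasing. Assume kernels K₁, K₂ satisfy the integrability condition (K^{int}_β) for some β > 1, and that f(t) ≤ A ∫₀ᵗ K₁(t,s) f(s) ds + B (∫₀ᵗ K₂(t,s)² f(s)² ds)^{1/2} + ψ(t) for all t ∈ [0,T], with A, B > 0. Then f(t) ≤ 2 ψ(t) e^{K′ t} for all t ∈ [0,T], where K′ = 2^{1/(1−ρ)} (1−ρ) ρ^{ρ/(1−ρ)} (A φ* + B ψ*)^{1/(1−ρ)}, ρ = (β+1)/(2β), φ* = sup_t (∫₀ᵗ K₁(t,s)^{2β/(β+1)} ds)^{(β+1)/(2β)}, ψ* = sup_t (∫₀ᵗ K₂(t,s)^{2β} ds)^{1/(2β)}. -/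

import Mathlib

open MeasureTheory Set Real Nat

/-! Hölder's inequality (exponents `2β/(β+1)`, `2β/(β-1)` for the first term, `β`, `β/(β-1)` for
the squared one) and the monotonicity bound `f ≤ f(t)` on `(0, t]` bound both Volterra terms by
`(A φ* + B ψ*) f(t)^ρ (∫₀ᵗ f)^(1-ρ)`. Weighted AM-GM with weight `a = (2ρ(Aφ* + Bψ*))^ρ` turns
this into `f(t)/2 + (K'/2) ∫₀ᵗ f`, so `f(t) ≤ 2ψ(t) + K' ∫₀ᵗ f`, and the classical Grönwall
lemma concludes. -/

lemma add_one_div_two_mul_mem_Ioo {β : ℝ} (hβ : 1 < β) : (β + 1) / (2 * β) ∈ Ioo 0 1 :=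
  ⟨by positivity, by rw [div_lt_one (by positivity)]; linarith⟩

lemma gronwall_rate_nonneg {ρ C : ℝ} (hρ : ρ ∈ Ioo 0 1) (hC : 0 ≤ C) :
    0 ≤ 2 ^ (1 / (1 - ρ)) * (1 - ρ) * ρ ^ (ρ / (1 - ρ)) * C ^ (1 / (1 - ρ)) := by
  have : 0 < 1 - ρ := sub_pos.2 hρ.2
  have := hρ.1
  positivity

lemma mul_rpow_mul_rpow_one_sub_le {ρ C g I : ℝ} (hρ : ρ ∈ Ioo 0 1) (hC : 0 ≤ C)
    (hg : 0 ≤ g) (hI : 0 ≤ I) :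
    C * (g ^ ρ * I ^ (1 - ρ)) ≤ g / 2
      + 2 ^ (1 / (1 - ρ)) * (1 - ρ) * ρ ^ (ρ / (1 - ρ)) * C ^ (1 / (1 - ρ)) / 2 * I := by
  obtain ⟨hρ₀, hρ₁⟩ := hρ
  have h1ρ : 0 < 1 - ρ := by linarith
  rcases hC.eq_or_lt with rfl | hC
  · rw [zero_rpow (one_div_ne_zero h1ρ.ne')]
    linarith
  set e := ρ / (1 - ρ) with he_def
  set v := 2 * ρ * C with hv_def
  have hv : 0 < v := by positivity
  have he : 1 / (1 - ρ) = 1 + e := by rw [he_def]; field_simp; ring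
  -- weighted AM-GM for `g / v` and `v ^ e * I`; `v = 2ρC` makes the `g`-term exactly `g / 2`
  have amgm : (g / v) ^ ρ * (v ^ e * I) ^ (1 - ρ) ≤ ρ * (g / v) + (1 - ρ) * (v ^ e * I) :=
    geom_mean_le_arith_mean2_weighted hρ₀.le h1ρ.le (by positivity) (by positivity)
      (by ring)
  have hsplit : g ^ ρ * I ^ (1 - ρ) = (g / v) ^ ρ * (v ^ e * I) ^ (1 - ρ) := by
    rw [div_rpow hg hv.le, mul_rpow (by positivity) hI, ← rpow_mul hv.le,
      show e * (1 - ρ) = ρ by rw [he_def]; field_simp]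
    field_simp
  have hve : v ^ e = 2 ^ e * ρ ^ e * C ^ e := by
    rw [mul_rpow (by positivity) hC.le, mul_rpow (by norm_num) hρ₀.le]
  calc C * (g ^ ρ * I ^ (1 - ρ)) ≤ C * (ρ * (g / v) + (1 - ρ) * (v ^ e * I)) := by
        rw [hsplit]; gcongr
    _ = _ := by
        rw [he, rpow_add two_pos, rpow_add hC, hve, rpow_one, rpow_one, hv_def]
        field_simp

section Integral

variable {α : Type*} [MeasurableSpace α] {μ : Measure α}

lemma memLp_ofReal_of_integrable_rpow {g : α → ℝ} (hg : 0 ≤ g) (hgm : AEStronglyMeasurable g μ)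
    {p : ℝ} (hp : 0 < p) (hgp : Integrable (fun x => g x ^ p) μ) :
    MemLp g (ENNReal.ofReal p) μ := by
  refine (integrable_norm_rpow_iff hgm (by simpa using hp) ENNReal.ofReal_ne_top).mp ?_
  simpa only [norm_of_nonneg (hg _), ENNReal.toReal_ofReal hp.le] using hgp

lemma integral_mul_le_of_integrable_rpow {p q : ℝ} (hpq : p.HolderConjugate q) {g f : α → ℝ}
    (hg : 0 ≤ g) (hf : 0 ≤ f) (hgm : AEStronglyMeasurable g μ) (hfm : AEStronglyMeasurable f μ)
    (hgp : Integrable (fun x => g x ^ p) μ) (hfq : Integrable (fun x => f x ^ q) μ) :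
    ∫ x, g x * f x ∂μ ≤ (∫ x, g x ^ p ∂μ) ^ (1 / p) * (∫ x, f x ^ q ∂μ) ^ (1 / q) :=
  integral_mul_le_Lp_mul_Lq_of_nonneg hpq (.of_forall hg) (.of_forall hf)
    (memLp_ofReal_of_integrable_rpow hg hgm hpq.pos hgp)
    (memLp_ofReal_of_integrable_rpow hf hfm hpq.symm.pos hfq)

lemma sq_rpow_eq_rpow_two_mul {x : ℝ} (hx : 0 ≤ x) (r : ℝ) : (x ^ 2) ^ r = x ^ (2 * r) := by
  simpa using (rpow_natCast_mul hx 2 r).symm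

lemma integral_sq_mul_sq_rpow_le {p q : ℝ} (hpq : p.HolderConjugate q) {g f : α → ℝ}
    (hg : 0 ≤ g) (hf : 0 ≤ f) (hgm : AEStronglyMeasurable g μ) (hfm : AEStronglyMeasurable f μ)
    (hgp : Integrable (fun x => g x ^ (2 * p)) μ) (hfq : Integrable (fun x => f x ^ (2 * q)) μ) :
    (∫ x, g x ^ 2 * f x ^ 2 ∂μ) ^ (1 / 2 : ℝ)
      ≤ (∫ x, g x ^ (2 * p) ∂μ) ^ (1 / (2 * p)) * (∫ x, f x ^ (2 * q) ∂μ) ^ (1 / (2 * q)) := by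
  have holder := integral_mul_le_of_integrable_rpow hpq (g := fun x => g x ^ 2)
    (f := fun x => f x ^ 2) (fun x => sq_nonneg _) (fun x => sq_nonneg _) (hgm.pow 2) (hfm.pow 2)
    (by simpa only [sq_rpow_eq_rpow_two_mul (hg _)] using hgp)
    (by simpa only [sq_rpow_eq_rpow_two_mul (hf _)] using hfq)
  simp only [sq_rpow_eq_rpow_two_mul (hg _), sq_rpow_eq_rpow_two_mul (hf _)] at holder
  have hG : 0 ≤ ∫ x, g x ^ (2 * p) ∂μ := integral_nonneg fun x => rpow_nonneg (hg x) _
  have hF : 0 ≤ ∫ x, f x ^ (2 * q) ∂μ := integral_nonneg fun x => rpow_nonneg (hf x) _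
  calc (∫ x, g x ^ 2 * f x ^ 2 ∂μ) ^ (1 / 2 : ℝ)
      ≤ ((∫ x, g x ^ (2 * p) ∂μ) ^ (1 / p) * (∫ x, f x ^ (2 * q) ∂μ) ^ (1 / q)) ^ (1 / 2 : ℝ) :=
        rpow_le_rpow (integral_nonneg fun x => by positivity) holder (by norm_num)
    _ = _ := by
        rw [mul_rpow (by positivity) (by positivity), ← rpow_mul hG,
          ← rpow_mul hF]
        congr 2 <;> field_simp

lemma integral_rpow_le_mul_integral {f : α → ℝ} {c q : ℝ} (hf : 0 ≤ f) (hfc : ∀ᵐ x ∂μ, f x ≤ c)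
    (hq : 1 ≤ q) (hfi : Integrable f μ) (hfq : Integrable (fun x => f x ^ q) μ) :
    ∫ x, f x ^ q ∂μ ≤ c ^ (q - 1) * ∫ x, f x ∂μ := by
  rw [← integral_const_mul]
  refine integral_mono_ae hfq (hfi.const_mul _) ?_
  filter_upwards [hfc] with x hx
  calc f x ^ q = f x ^ (q - 1) * f x := by
        rw [← rpow_add_one' (hf x) (by linarith)]; ring_nf
    _ ≤ c ^ (q - 1) * f x :=
        mul_le_mul_of_nonneg_right (rpow_le_rpow (hf x) hx (by linarith)) (hf x)

lemma integrable_rpow_of_ae_le [IsFiniteMeasure μ] {f : α → ℝ} {c : ℝ} (hf : 0 ≤ f)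
    (hfm : AEStronglyMeasurable f μ) (hfc : ∀ᵐ x ∂μ, f x ≤ c) {q : ℝ} (hq : 0 ≤ q) :
    Integrable (fun x => f x ^ q) μ := by
  refine .of_bound (hfm.aemeasurable.pow_const q).aestronglyMeasurable (c ^ q) ?_
  filter_upwards [hfc] with x hx
  rw [norm_of_nonneg (rpow_nonneg (hf x) q)]
  exact rpow_le_rpow (hf x) hx hq

lemma rpow_integral_rpow_le [IsFiniteMeasure μ] {f : α → ℝ} {c q : ℝ} (hf : 0 ≤ f)
    (hc : 0 ≤ c) (hfc : ∀ᵐ x ∂μ, f x ≤ c) (hq : 1 ≤ q) (hfi : Integrable f μ) :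
    (∫ x, f x ^ q ∂μ) ^ (1 / q) ≤ c ^ (1 - 1 / q) * (∫ x, f x ∂μ) ^ (1 / q) := by
  have hI : 0 ≤ ∫ x, f x ∂μ := integral_nonneg hf
  calc (∫ x, f x ^ q ∂μ) ^ (1 / q) ≤ (c ^ (q - 1) * ∫ x, f x ∂μ) ^ (1 / q) := by
        refine rpow_le_rpow (integral_nonneg fun x => rpow_nonneg (hf x) q)
          (integral_rpow_le_mul_integral hf hfc hq hfi ?_) (by positivity)
        exact integrable_rpow_of_ae_le hf hfi.aestronglyMeasurable hfc (by linarith)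
    _ = c ^ (1 - 1 / q) * (∫ x, f x ∂μ) ^ (1 / q) := by
        rw [mul_rpow (by positivity) hI, ← rpow_mul hc]
        congr 2
        field_simp

lemma volterra_terms_le [IsFiniteMeasure μ] {β A B c : ℝ} (hβ : 1 < β) (hA : 0 ≤ A) (hB : 0 ≤ B)
    {k₁ k₂ f : α → ℝ} (hk₁ : 0 ≤ k₁) (hk₂ : 0 ≤ k₂) (hk₁m : AEStronglyMeasurable k₁ μ)
    (hk₂m : AEStronglyMeasurable k₂ μ) (hk₁i : Integrable (fun x => k₁ x ^ (2 * β / (β + 1))) μ)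
    (hk₂i : Integrable (fun x => k₂ x ^ (2 * β)) μ) (hf : 0 ≤ f) (hc : 0 ≤ c)
    (hfc : ∀ᵐ x ∂μ, f x ≤ c) (hfi : Integrable f μ) :
    A * ∫ x, k₁ x * f x ∂μ + B * (∫ x, k₂ x ^ 2 * f x ^ 2 ∂μ) ^ (1 / 2 : ℝ)
      ≤ (A * (∫ x, k₁ x ^ (2 * β / (β + 1)) ∂μ) ^ ((β + 1) / (2 * β))
          + B * (∫ x, k₂ x ^ (2 * β) ∂μ) ^ (1 / (2 * β)))
        * (c ^ ((β + 1) / (2 * β)) * (∫ x, f x ∂μ) ^ (1 - (β + 1) / (2 * β))) := by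
  obtain ⟨q, hq⟩ : ∃ q, q = 2 * β / (β - 1) := ⟨_, rfl⟩
  have hβ₁ : 0 < β - 1 := by linarith
  have hq₁ : 1 ≤ q := by rw [hq, le_div_iff₀ hβ₁]; linarith
  have hconj₁ : (2 * β / (β + 1)).HolderConjugate q := by
    rw [Real.holderConjugate_iff]
    refine ⟨by rw [lt_div_iff₀ (by linarith)]; linarith, ?_⟩
    rw [hq]
    field_simp
    ring
  have hconj₂ : β.HolderConjugate (β / (β - 1)) := .conjExponent hβ
  have hq₂ : 2 * (β / (β - 1)) = q := by rw [hq]; ring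
  -- both terms are controlled by the `L^q` norm of `f`, with `1 / q = 1 - ρ`
  have hfq : (∫ x, f x ^ q ∂μ) ^ (1 / q)
      ≤ c ^ ((β + 1) / (2 * β)) * (∫ x, f x ∂μ) ^ (1 - (β + 1) / (2 * β)) := by
    convert rpow_integral_rpow_le hf hc hfc hq₁ hfi using 3 <;> rw [hq] <;> field_simp <;> ring
  have hfqi := integrable_rpow_of_ae_le hf hfi.aestronglyMeasurable hfc (q := q) (by linarith)
  have term₁ := integral_mul_le_of_integrable_rpow hconj₁ hk₁ hf hk₁m hfi.aestronglyMeasurable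
    hk₁i hfqi
  have term₂ := integral_sq_mul_sq_rpow_le hconj₂ hk₂ hf hk₂m hfi.aestronglyMeasurable hk₂i
    (by rwa [hq₂])
  rw [hq₂] at term₂
  rw [one_div_div] at term₁
  have hK₁ : 0 ≤ (∫ x, k₁ x ^ (2 * β / (β + 1)) ∂μ) ^ ((β + 1) / (2 * β)) := by
    have : 0 ≤ ∫ x, k₁ x ^ (2 * β / (β + 1)) ∂μ :=
      integral_nonneg fun x => rpow_nonneg (hk₁ x) _
    positivity
  have hK₂ : 0 ≤ (∫ x, k₂ x ^ (2 * β) ∂μ) ^ (1 / (2 * β)) := by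
    have : 0 ≤ ∫ x, k₂ x ^ (2 * β) ∂μ := integral_nonneg fun x => rpow_nonneg (hk₂ x) _
    positivity
  calc _ ≤ A * ((∫ x, k₁ x ^ (2 * β / (β + 1)) ∂μ) ^ ((β + 1) / (2 * β))
          * (∫ x, f x ^ q ∂μ) ^ (1 / q))
        + B * ((∫ x, k₂ x ^ (2 * β) ∂μ) ^ (1 / (2 * β)) * (∫ x, f x ^ q ∂μ) ^ (1 / q)) := by
        gcongr
    _ ≤ _ := by
        rw [← mul_assoc, ← mul_assoc, ← add_mul]
        gcongr

lemma le_two_mul_add_mul_integral_of_le_volterra [IsFiniteMeasure μ]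
    {β ρ A B Φ Ψ c d K' : ℝ} (hβ : 1 < β) (hρ : ρ = (β + 1) / (2 * β)) (hA : 0 ≤ A) (hB : 0 ≤ B)
    {k₁ k₂ f : α → ℝ} (hk₁ : 0 ≤ k₁) (hk₂ : 0 ≤ k₂) (hk₁m : AEStronglyMeasurable k₁ μ)
    (hk₂m : AEStronglyMeasurable k₂ μ) (hk₁i : Integrable (fun x => k₁ x ^ (2 * β / (β + 1))) μ)
    (hk₂i : Integrable (fun x => k₂ x ^ (2 * β)) μ) (hf : 0 ≤ f) (hc : 0 ≤ c)
    (hfc : ∀ᵐ x ∂μ, f x ≤ c) (hfi : Integrable f μ)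
    (hΦ : (∫ x, k₁ x ^ (2 * β / (β + 1)) ∂μ) ^ ((β + 1) / (2 * β)) ≤ Φ)
    (hΨ : (∫ x, k₂ x ^ (2 * β) ∂μ) ^ (1 / (2 * β)) ≤ Ψ)
    (hK' : K' = 2 ^ (1 / (1 - ρ)) * (1 - ρ) * ρ ^ (ρ / (1 - ρ))
      * (A * Φ + B * Ψ) ^ (1 / (1 - ρ)))
    (hle : c ≤ A * ∫ x, k₁ x * f x ∂μ + B * (∫ x, k₂ x ^ 2 * f x ^ 2 ∂μ) ^ (1 / 2 : ℝ) + d) :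
    c ≤ 2 * d + K' * ∫ x, f x ∂μ := by
  have hI : 0 ≤ ∫ x, f x ∂μ := integral_nonneg hf
  have hC : 0 ≤ A * Φ + B * Ψ := by
    have : 0 ≤ Φ := (rpow_nonneg (integral_nonneg fun x => rpow_nonneg (hk₁ x) _) _).trans hΦ
    have : 0 ≤ Ψ := (rpow_nonneg (integral_nonneg fun x => rpow_nonneg (hk₂ x) _) _).trans hΨ
    positivity
  have holder := (volterra_terms_le hβ hA hB hk₁ hk₂ hk₁m hk₂m hk₁i hk₂i hf hc hfc hfi).trans
    (mul_le_mul_of_nonneg_right (add_le_add (mul_le_mul_of_nonneg_left hΦ hA)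
      (mul_le_mul_of_nonneg_left hΨ hB)) (mul_nonneg (rpow_nonneg hc _) (rpow_nonneg hI _)))
  rw [← hρ] at holder
  have young := mul_rpow_mul_rpow_one_sub_le (hρ ▸ add_one_div_two_mul_mem_Ioo hβ) hC hc hI
  rw [← hK'] at young
  linarith

lemma integrable_and_integral_le_of_add {g h : α → ℝ} {M : ℝ} (hg : 0 ≤ g) (hh : 0 ≤ h)
    (hgm : AEStronglyMeasurable g μ) (hhm : AEStronglyMeasurable h μ)
    (hgh : Integrable (fun x => g x + h x) μ) (hM : ∫ x, (g x + h x) ∂μ ≤ M) :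
    (Integrable g μ ∧ ∫ x, g x ∂μ ≤ M) ∧ (Integrable h μ ∧ ∫ x, h x ∂μ ≤ M) := by
  have hg_le : ∀ x, g x ≤ g x + h x := fun x => le_add_of_nonneg_right (hh x)
  have hh_le : ∀ x, h x ≤ g x + h x := fun x => le_add_of_nonneg_left (hg x)
  refine ⟨⟨?_, ?_⟩, ?_, ?_⟩
  · exact hgh.mono' hgm (.of_forall fun x => by rw [norm_of_nonneg (hg x)]; exact hg_le x)
  · exact (integral_mono_of_nonneg (.of_forall hg) hgh (.of_forall hg_le)).trans hM
  · exact hgh.mono' hhm (.of_forall fun x => by rw [norm_of_nonneg (hh x)]; exact hh_le x)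
  · exact (integral_mono_of_nonneg (.of_forall hh) hgh (.of_forall hh_le)).trans hM

end Integral

lemma mul_integral_pow_div_factorial (K s : ℝ) (n : ℕ) :
    K * ∫ u in (0 : ℝ)..s, (K * u) ^ n / n ! = (K * s) ^ (n + 1) / (n + 1)! := by
  simp_rw [mul_pow, mul_div_assoc, intervalIntegral.integral_const_mul, div_eq_mul_inv (_ ^ n),
    intervalIntegral.integral_mul_const, integral_pow, Nat.factorial_succ]
  push_cast
  field_simp
  ring

lemma add_mul_integral_mul_exp (a K s : ℝ) :
    a + K * ∫ u in (0 : ℝ)..s, a * exp (K * u) = a * exp (K * s) := by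
  have hderiv : ∀ u ∈ uIcc 0 s, HasDerivAt (fun u => a * exp (K * u)) (K * (a * exp (K * u))) u :=
    fun u _ => by
      simpa [mul_comm, mul_left_comm] using ((hasDerivAt_mul_const K).exp.const_mul a)
  rw [← intervalIntegral.integral_const_mul,
    intervalIntegral.integral_eq_sub_of_hasDerivAt hderiv
      (Continuous.intervalIntegrable (by fun_prop) _ _)]
  simp

lemma nonpos_of_le_mul_setIntegral {d : ℝ → ℝ} {K D t : ℝ} (hK : 0 ≤ K) (ht : 0 ≤ t)
    (hd : IntegrableOn d (Icc 0 t)) (hdD : ∀ s ∈ Icc 0 t, d s ≤ D)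
    (hle : ∀ s ∈ Icc 0 t, d s ≤ K * ∫ u in Ioc 0 s, d u) : d t ≤ 0 := by
  have bound : ∀ n : ℕ, ∀ s ∈ Icc 0 t, d s ≤ D * ((K * s) ^ n / n !) := by
    intro n
    induction n with
    | zero => simpa using hdD
    | succ n ih =>
      intro s hs
      calc d s ≤ K * ∫ u in Ioc 0 s, d u := hle s hs
        _ ≤ K * ∫ u in Ioc 0 s, D * ((K * u) ^ n / n !) := by
          have hsub : Ioc 0 s ⊆ Icc 0 t := fun u hu => ⟨hu.1.le, hu.2.trans hs.2⟩
          refine mul_le_mul_of_nonneg_left (setIntegral_mono_on (hd.mono_set hsub)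
            (by fun_prop : Continuous _).integrableOn_Ioc measurableSet_Ioc
            fun u hu => ih u (hsub hu)) hK
        _ = D * ((K * s) ^ (n + 1) / (n + 1)!) := by
          rw [← intervalIntegral.integral_of_le hs.1, intervalIntegral.integral_const_mul,
            mul_left_comm, mul_integral_pow_div_factorial]
  have hlim : Filter.Tendsto (fun n : ℕ => D * ((K * t) ^ n / n !)) Filter.atTop (nhds 0) := by
    simpa using (FloorSemiring.tendsto_pow_div_factorial_atTop (K * t)).const_mul D
  exact ge_of_tendsto' hlim fun n => bound n t ⟨ht, le_rfl⟩

theorem le_mul_exp_of_le_add_mul_setIntegral {f g : ℝ → ℝ} {K T : ℝ} (hK : 0 ≤ K)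
    (hf : IntegrableOn f (Icc 0 T)) (hfm : MonotoneOn f (Icc 0 T)) (hg : ∀ t ∈ Icc 0 T, 0 ≤ g t)
    (hgm : MonotoneOn g (Icc 0 T)) (hle : ∀ s ∈ Icc 0 T, f s ≤ g s + K * ∫ u in Ioc 0 s, f u) :
    ∀ t ∈ Icc 0 T, f t ≤ g t * exp (K * t) := by
  intro t ht
  have hsub : Icc 0 t ⊆ Icc 0 T := Icc_subset_Icc_right ht.2
  have hexp : Continuous fun u => g t * exp (K * u) := by fun_prop
  -- `g t * exp (K * ·)` solves the integral equation with constant forcing `g t`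
  suffices f t - g t * exp (K * t) ≤ 0 by linarith
  refine nonpos_of_le_mul_setIntegral (d := fun u => f u - g t * exp (K * u)) (D := f t) hK ht.1
    ((hf.mono_set hsub).sub hexp.integrableOn_Icc) (fun s hs => ?_) (fun s hs => ?_)
  · have := hfm (hsub hs) ht hs.2
    have := mul_nonneg (hg t ht) (exp_pos (K * s)).le
    linarith
  · rw [integral_sub (hf.mono_set fun u hu => ⟨hu.1.le, hu.2.trans (hsub hs).2⟩)
      hexp.integrableOn_Ioc, mul_sub,
      ← intervalIntegral.integral_of_le hs.1 (f := fun u => g t * exp (K * u)),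
      ← add_mul_integral_mul_exp (g t) K s]
    linarith [hle s (hsub hs), hgm (hsub hs) ht hs.2]

lemma rpow_setIntegral_le_iSup {T r e M t : ℝ} {K : ℝ → ℝ → ℝ} (hK : ∀ t s, 0 ≤ K t s)
    (he : 0 ≤ e) (hM : ∀ t ∈ Icc 0 T, ∫ s in Ioc 0 t, K t s ^ r ≤ M) (ht : t ∈ Icc 0 T) :
    (∫ s in Ioc 0 t, K t s ^ r) ^ e ≤ ⨆ t : Icc (0 : ℝ) T, (∫ s in Ioc 0 (t : ℝ), K t s ^ r) ^ e :=
  have hI : ∀ t, 0 ≤ ∫ s in Ioc 0 t, K t s ^ r := fun t =>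
    integral_nonneg fun s => rpow_nonneg (hK t s) r
  le_ciSup (f := fun t : Icc (0 : ℝ) T => (∫ s in Ioc 0 (t : ℝ), K t s ^ r) ^ e)
    ⟨M ^ e, forall_mem_range.2 fun t => rpow_le_rpow (hI t) (hM t t.2) he⟩ ⟨t, ht⟩

theorem generalized_gronwall_volterra_general
    (T β A B : ℝ) (hβ : 1 < β) (hA : 0 < A) (hB : 0 < B)
    (K₁ K₂ : ℝ → ℝ → ℝ) (hK1nn : ∀ t s, 0 ≤ K₁ t s) (hK2nn : ∀ t s, 0 ≤ K₂ t s)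
    (hK1meas : ∀ t, Measurable (K₁ t)) (hK2meas : ∀ t, Measurable (K₂ t))
    (hKint : ∀ t ∈ Icc (0 : ℝ) T,
      IntegrableOn (fun s => K₁ t s ^ (2 * β / (β + 1)) + K₂ t s ^ (2 * β)) (Ioc 0 t))
    (M : ℝ)
    (hM : ∀ t ∈ Icc (0 : ℝ) T,
      ∫ s in Ioc (0 : ℝ) t, (K₁ t s ^ (2 * β / (β + 1)) + K₂ t s ^ (2 * β)) ≤ M)
    (f : ℝ → ℝ) (hfnn : ∀ t, 0 ≤ f t)
    (hfint : IntegrableOn f (Icc 0 T)) (hfmono : MonotoneOn f (Icc 0 T))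
    (ψ : ℝ → ℝ) (hψnn : ∀ t, 0 ≤ ψ t) (hψmono : MonotoneOn ψ (Icc 0 T))
    (hineq : ∀ t ∈ Icc (0 : ℝ) T,
      f t ≤ A * (∫ s in Ioc (0 : ℝ) t, K₁ t s * f s)
        + B * (∫ s in Ioc (0 : ℝ) t, K₂ t s ^ (2 : ℕ) * f s ^ (2 : ℕ)) ^ ((1 : ℝ) / 2)
        + ψ t)
    (ρ : ℝ) (hρ : ρ = (β + 1) / (2 * β))
    (φstar : ℝ)
    (hφstar : φstar = ⨆ t : Icc (0 : ℝ) T,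
      (∫ s in Ioc (0 : ℝ) (t : ℝ), K₁ (t : ℝ) s ^ (2 * β / (β + 1))) ^ ((β + 1) / (2 * β)))
    (ψstar : ℝ)
    (hψstar : ψstar = ⨆ t : Icc (0 : ℝ) T,
      (∫ s in Ioc (0 : ℝ) (t : ℝ), K₂ (t : ℝ) s ^ (2 * β)) ^ (1 / (2 * β)))
    (K' : ℝ)
    (hK' : K' = 2 ^ (1 / (1 - ρ)) * (1 - ρ) * ρ ^ (ρ / (1 - ρ))
      * (A * φstar + B * ψstar) ^ (1 / (1 - ρ))) :
    ∀ t ∈ Icc (0 : ℝ) T, f t ≤ 2 * ψ t * Real.exp (K' * t) := by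
  have hK := fun s (hs : s ∈ Icc (0 : ℝ) T) =>
    integrable_and_integral_le_of_add (μ := volume.restrict (Ioc 0 s))
      (fun u => rpow_nonneg (hK1nn s u) (2 * β / (β + 1))) (fun u => rpow_nonneg (hK2nn s u) _)
      ((hK1meas s).pow_const _).aestronglyMeasurable ((hK2meas s).pow_const _).aestronglyMeasurable
      (hKint s hs) (hM s hs)
  have hΦ := fun s (hs : s ∈ Icc (0 : ℝ) T) => hφstar ▸
    rpow_setIntegral_le_iSup hK1nn (by positivity) (fun u hu => (hK u hu).1.2) hs
  have hΨ := fun s (hs : s ∈ Icc (0 : ℝ) T) => hψstar ▸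
    rpow_setIntegral_le_iSup hK2nn (by positivity) (fun u hu => (hK u hu).2.2) hs
  have linear : ∀ s ∈ Icc (0 : ℝ) T, f s ≤ 2 * ψ s + K' * ∫ u in Ioc 0 s, f u := fun s hs =>
    le_two_mul_add_mul_integral_of_le_volterra hβ hρ hA.le hB.le (hK1nn s) (hK2nn s)
      (hK1meas s).aestronglyMeasurable (hK2meas s).aestronglyMeasurable (hK s hs).1.1
      (hK s hs).2.1 hfnn (hfnn s)
      ((ae_restrict_iff' measurableSet_Ioc).2 (.of_forall fun u hu =>
        hfmono ⟨hu.1.le, hu.2.trans hs.2⟩ hs hu.2))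
      (hfint.mono_set fun u hu => ⟨hu.1.le, hu.2.trans hs.2⟩) (hΦ s hs) (hΨ s hs) hK'
      (hineq s hs)
  have hK'₀ : 0 ≤ K' := by
    have : 0 ≤ φstar := hφstar ▸ iSup_nonneg fun t =>
      rpow_nonneg (integral_nonneg fun s => rpow_nonneg (hK1nn t s) _) _
    have : 0 ≤ ψstar := hψstar ▸ iSup_nonneg fun t =>
      rpow_nonneg (integral_nonneg fun s => rpow_nonneg (hK2nn t s) _) _
    exact hK' ▸ gronwall_rate_nonneg (hρ ▸ add_one_div_two_mul_mem_Ioo hβ) (by positivity)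
  exact le_mul_exp_of_le_add_mul_setIntegral hK'₀ hfint hfmono (fun t _ => by linarith [hψnn t])
    (fun a ha b hb hab => by linarith [hψmono ha hb hab]) linear

/-- Generalized Grönwall lemma of Volterra type: if
`f(t) ≤ A ∫₀ᵗ K₁(t,s) f(s) ds + B (∫₀ᵗ K₂(t,s)² f(s)² ds)^{1/2} + ψ(t)`
with kernels satisfying the integrability condition `(K^int_β)`, then
`f(t) ≤ 2 ψ(t) e^{K' t}` with the explicit constant `K'`. -/
theorem generalized_gronwall_volterra
    (T β A B : ℝ) (hT : 0 < T) (hβ : 1 < β) (hA : 0 < A) (hB : 0 < B)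
    (K₁ K₂ : ℝ → ℝ → ℝ) (hK1nn : ∀ t s, 0 ≤ K₁ t s) (hK2nn : ∀ t s, 0 ≤ K₂ t s)
    (hK1meas : ∀ t, Measurable (K₁ t)) (hK2meas : ∀ t, Measurable (K₂ t))
    (hKint : ∀ t ∈ Icc (0 : ℝ) T,
      IntegrableOn (fun s => K₁ t s ^ (2 * β / (β + 1)) + K₂ t s ^ (2 * β)) (Ioc 0 t))
    (M : ℝ)
    (hM : ∀ t ∈ Icc (0 : ℝ) T,
      ∫ s in Ioc (0 : ℝ) t, (K₁ t s ^ (2 * β / (β + 1)) + K₂ t s ^ (2 * β)) ≤ M)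
    (f : ℝ → ℝ) (hfnn : ∀ t, 0 ≤ f t) (hfmeas : Measurable f)
    (hfint : IntegrableOn f (Icc 0 T)) (hfmono : MonotoneOn f (Icc 0 T))
    (ψ : ℝ → ℝ) (hψnn : ∀ t, 0 ≤ ψ t) (hψmono : MonotoneOn ψ (Icc 0 T))
    (hineq : ∀ t ∈ Icc (0 : ℝ) T,
      f t ≤ A * (∫ s in Ioc (0 : ℝ) t, K₁ t s * f s)
        + B * (∫ s in Ioc (0 : ℝ) t, K₂ t s ^ (2 : ℕ) * f s ^ (2 : ℕ)) ^ ((1 : ℝ) / 2)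
        + ψ t)
    (ρ : ℝ) (hρ : ρ = (β + 1) / (2 * β))
    (φstar : ℝ)
    (hφstar : φstar = ⨆ t : Icc (0 : ℝ) T,
      (∫ s in Ioc (0 : ℝ) (t : ℝ), K₁ (t : ℝ) s ^ (2 * β / (β + 1))) ^ ((β + 1) / (2 * β)))
    (ψstar : ℝ)
    (hψstar : ψstar = ⨆ t : Icc (0 : ℝ) T,
      (∫ s in Ioc (0 : ℝ) (t : ℝ), K₂ (t : ℝ) s ^ (2 * β)) ^ (1 / (2 * β)))
    (K' : ℝ)
    (hK' : K' = 2 ^ (1 / (1 - ρ)) * (1 - ρ) * ρ ^ (ρ / (1 - ρ))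
      * (A * φstar + B * ψstar) ^ (1 / (1 - ρ))) :
    ∀ t ∈ Icc (0 : ℝ) T, f t ≤ 2 * ψ t * Real.exp (K' * t) :=
  generalized_gronwall_volterra_general T β A B hβ hA hB K₁ K₂ hK1nn hK2nn hK1meas hK2meas hKint M
    hM f hfnn hfint hfmono ψ hψnn hψmono hineq ρ hρ φstar hφstar ψstar hψstar K' hK'
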